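/- Suppose two continuous functions G₁, G₂ : [0,T]×ℝ^d×M₂(ℝ^d) → ℝ satisfy G₁(s,x,μ) = G₂(s,x,μ) for all s ∈ [0,T], all μ ∈ M₂(ℝ^d), and all x ∈ supp(μ). Then G₁ = G₂ everywhere on [0,T]×ℝ^d×M₂(ℝ^d). -/

import Mathlib

open MeasureTheory Filter Set

noncomputable section

/-- Euclidean space ℝ^d. -/
abbrev Ed (d : ℕ) := EuclideanSpace ℝ (Fin d)

/-- The space `M₂(ℝ^d)` of Borel probability measures on ℝ^d with finite second moment. -/
def M2 (d : ℕ) : Type :=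
  {μ : Measure (Ed d) // IsProbabilityMeasure μ ∧ ∫⁻ x, (‖x‖₊ : ENNReal) ^ 2 ∂μ < ⊤}

/-- The second moment `μ(|·|²)` of a measure in `M₂(ℝ^d)`. -/
def mom {d : ℕ} (μ : M2 d) : ℝ := ∫ x, ‖x‖ ^ 2 ∂μ.1

/-- The squared 2-Wasserstein distance, as the infimum of coupling costs. -/
def W2sq {d : ℕ} (μ₁ μ₂ : M2 d) : ℝ :=
  sInf {r | ∃ π : Measure (Ed d × Ed d), π.map Prod.fst = μ₁.1 ∧ π.map Prod.snd = μ₂.1 ∧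
    r = ∫ p, ‖p.1 - p.2‖ ^ 2 ∂π}

/-- The 2-Wasserstein metric `ρ`. -/
def W2 {d : ℕ} (μ₁ μ₂ : M2 d) : ℝ := Real.sqrt (W2sq μ₁ μ₂)

/-- The Dirac measure δ₀ as an element of `M₂(ℝ^d)`. -/
def dirac0 (d : ℕ) : M2 d :=
  ⟨Measure.dirac 0, ⟨inferInstance, by simp [MeasureTheory.lintegral_dirac]⟩⟩

open scoped ENNReal

/-! Mixing a little mass into `x`, `μₜ = (1 - t) μ + t δₓ`, puts `x` into the support of `μₜ`, and
the coupling that leaves `(1 - t) μ` in place and moves `t μ` to `x` shows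
`ρ(μₜ, μ)² ≤ t ∫ ‖x - y‖² dμ(y)`. So `G₁ = G₂` at `(s, x, μₜ)` for every `t ∈ (0, 1]`, and
continuity in the measure variable passes this to the limit `t → 0`. -/

lemma isProbabilityMeasure_smul_add_smul {α : Type*} [MeasurableSpace α] {μ ν : Measure α}
    [IsProbabilityMeasure μ] [IsProbabilityMeasure ν] {t : ℝ≥0∞} (ht : t ≤ 1) :
    IsProbabilityMeasure ((1 - t) • μ + t • ν) :=
  ⟨by simp [tsub_add_cancel_of_le ht]⟩

namespace M2

variable {d : ℕ}

instance (μ : M2 d) : IsProbabilityMeasure μ.1 := μ.2.1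

lemma integrable_norm_sub_sq (μ : M2 d) (x : Ed d) :
    Integrable (fun y => ‖x - y‖ ^ 2) μ.1 := by
  have hsq : Integrable (fun y : Ed d => ‖y‖ ^ 2) μ.1 := by
    refine ⟨by fun_prop, ?_⟩
    simpa [HasFiniteIntegral, enorm_pow, enorm_eq_nnnorm] using μ.2.2
  have hid : MemLp id 2 μ.1 :=
    (memLp_two_iff_integrable_sq_norm aestronglyMeasurable_id).2 hsq
  exact ((memLp_const x).sub hid).integrable_norm_pow two_ne_zero

def mixDirac (μ : M2 d) (x : Ed d) (t : ℝ≥0∞) (ht : t ≤ 1) : M2 d :=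
  ⟨(1 - t) • μ.1 + t • Measure.dirac x, isProbabilityMeasure_smul_add_smul ht, by
    rw [lintegral_add_measure, lintegral_smul_measure, lintegral_smul_measure, lintegral_dirac]
    exact ENNReal.add_lt_top.2
      ⟨ENNReal.mul_lt_top (tsub_le_self.trans_lt ENNReal.one_lt_top) μ.2.2,
        ENNReal.mul_lt_top (ht.trans_lt ENNReal.one_lt_top) (by simp)⟩⟩

lemma mixDirac_ball_pos (μ : M2 d) (x : Ed d) {t : ℝ≥0∞} (ht : t ≤ 1) (ht₀ : 0 < t) {r : ℝ}
    (hr : 0 < r) : 0 < (μ.mixDirac x t ht).1 (Metric.ball x r) := by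
  have hδ : Measure.dirac x (Metric.ball x r) = 1 :=
    Measure.dirac_apply_of_mem (Metric.mem_ball_self hr)
  simp only [mixDirac, Measure.add_apply, Measure.smul_apply, hδ, smul_eq_mul, mul_one]
  exact ht₀.trans_le le_add_self

lemma W2sq_le_of_coupling {μ₁ μ₂ : M2 d} {π : Measure (Ed d × Ed d)}
    (h₁ : π.map Prod.fst = μ₁.1) (h₂ : π.map Prod.snd = μ₂.1) :
    W2sq μ₁ μ₂ ≤ ∫ p, ‖p.1 - p.2‖ ^ 2 ∂π :=
  csInf_le ⟨0, fun _ ⟨_, _, _, hr⟩ => hr ▸ integral_nonneg fun _ => by positivity⟩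
    ⟨π, h₁, h₂, rfl⟩

lemma W2sq_mixDirac_le (μ : M2 d) (x : Ed d) {t : ℝ≥0∞} (ht : t ≤ 1) :
    W2sq (μ.mixDirac x t ht) μ ≤ t.toReal * ∫ y, ‖x - y‖ ^ 2 ∂μ.1 := by
  have hdiag : Measurable fun y : Ed d => (y, y) := by fun_prop
  have hpair : Measurable fun y : Ed d => (x, y) := by fun_prop
  have hcost : Continuous fun p : Ed d × Ed d => ‖p.1 - p.2‖ ^ 2 := by fun_prop
  set π := (1 - t) • μ.1.map (fun y => (y, y)) + t • μ.1.map (fun y => (x, y))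
  have hfst : π.map Prod.fst = (μ.mixDirac x t ht).1 := by
    simp only [π, mixDirac, Measure.map_add _ _ measurable_fst, Measure.map_smul,
      Measure.map_map measurable_fst hdiag, Measure.map_map measurable_fst hpair]
    simp [Function.comp_def, Measure.map_const]
  have hsnd : π.map Prod.snd = μ.1 := by
    simp only [π, Measure.map_add _ _ measurable_snd, Measure.map_smul,
      Measure.map_map measurable_snd hdiag, Measure.map_map measurable_snd hpair]
    simp [Function.comp_def, ← add_smul, tsub_add_cancel_of_le ht]
  have hint_diag : Integrable (fun p : Ed d × Ed d => ‖p.1 - p.2‖ ^ 2)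
      (μ.1.map fun y => (y, y)) := by
    rw [integrable_map_measure hcost.aestronglyMeasurable hdiag.aemeasurable]
    simp [Function.comp_def]
  have hint_pair : Integrable (fun p : Ed d × Ed d => ‖p.1 - p.2‖ ^ 2)
      (μ.1.map fun y => (x, y)) := by
    rw [integrable_map_measure hcost.aestronglyMeasurable hpair.aemeasurable]
    exact integrable_norm_sub_sq μ x
  calc W2sq (μ.mixDirac x t ht) μ ≤ ∫ p, ‖p.1 - p.2‖ ^ 2 ∂π := W2sq_le_of_coupling hfst hsnd
    _ = t.toReal * ∫ y, ‖x - y‖ ^ 2 ∂μ.1 := by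
      rw [integral_add_measure (hint_diag.smul_measure (by simp))
        (hint_pair.smul_measure (ht.trans_lt ENNReal.one_lt_top).ne),
        integral_smul_measure, integral_smul_measure,
        integral_map hdiag.aemeasurable hcost.aestronglyMeasurable,
        integral_map hpair.aemeasurable hcost.aestronglyMeasurable]
      simp

lemma tendsto_W2_mixDirac (μ : M2 d) (x : Ed d) {t : ℕ → ℝ≥0∞} (ht : ∀ n, t n ≤ 1)
    (ht₀ : Tendsto t atTop (nhds 0)) :
    Tendsto (fun n => W2 (μ.mixDirac x (t n) (ht n)) μ) atTop (nhds 0) := by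
  have hbound : Tendsto (fun n => √((t n).toReal * ∫ y, ‖x - y‖ ^ 2 ∂μ.1)) atTop (nhds 0) := by
    simpa using (((ENNReal.tendsto_toReal ENNReal.zero_ne_top).comp ht₀).mul_const
      (∫ y, ‖x - y‖ ^ 2 ∂μ.1)).sqrt
  exact squeeze_zero (fun _ => Real.sqrt_nonneg _)
    (fun n => Real.sqrt_le_sqrt (W2sq_mixDirac_le μ x (ht n))) hbound

end M2

theorem equal_on_support_implies_equal_general (d : ℕ) (T : ℝ)
    (G₁ G₂ : ℝ → Ed d → M2 d → ℝ)
    (hcont₁ : ∀ (s : ℝ) (x : Ed d) (μ : M2 d) (sn : ℕ → ℝ) (xn : ℕ → Ed d) (mn : ℕ → M2 d),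
      Tendsto sn atTop (nhds s) → Tendsto xn atTop (nhds x) →
      Tendsto (fun n => W2 (mn n) μ) atTop (nhds 0) →
      Tendsto (fun n => G₁ (sn n) (xn n) (mn n)) atTop (nhds (G₁ s x μ)))
    (hcont₂ : ∀ (s : ℝ) (x : Ed d) (μ : M2 d) (sn : ℕ → ℝ) (xn : ℕ → Ed d) (mn : ℕ → M2 d),
      Tendsto sn atTop (nhds s) → Tendsto xn atTop (nhds x) →
      Tendsto (fun n => W2 (mn n) μ) atTop (nhds 0) →
      Tendsto (fun n => G₂ (sn n) (xn n) (mn n)) atTop (nhds (G₂ s x μ)))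
    (heq : ∀ s ∈ Set.Icc (0 : ℝ) T, ∀ (μ : M2 d) (x : Ed d),
      (∀ r : ℝ, 0 < r → 0 < μ.1 (Metric.ball x r)) → G₁ s x μ = G₂ s x μ) :
    ∀ s ∈ Set.Icc (0 : ℝ) T, ∀ (x : Ed d) (μ : M2 d), G₁ s x μ = G₂ s x μ := by
  intro s hs x μ
  set t : ℕ → ℝ≥0∞ := fun n => ((n + 1 : ℕ) : ℝ≥0∞)⁻¹
  have ht : ∀ n, t n ≤ 1 := fun n => ENNReal.inv_le_one.2 (Nat.one_le_cast.2 n.succ_pos)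
  have ht₀ : Tendsto t atTop (nhds 0) :=
    ENNReal.tendsto_inv_nat_nhds_zero.comp (tendsto_add_atTop_nat 1)
  set μn := fun n => μ.mixDirac x (t n) (ht n)
  have hμn : Tendsto (fun n => W2 (μn n) μ) atTop (nhds 0) := M2.tendsto_W2_mixDirac μ x ht ht₀
  have heqn : ∀ n, G₁ s x (μn n) = G₂ s x (μn n) := fun n =>
    heq s hs _ x fun _ hr => M2.mixDirac_ball_pos μ x (ht n) (by simp [t]) hr
  exact tendsto_nhds_unique
    ((hcont₁ s x μ _ _ μn tendsto_const_nhds tendsto_const_nhds hμn).congr heqn)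
    (hcont₂ s x μ _ _ μn tendsto_const_nhds tendsto_const_nhds hμn)

/-- two continuous functions on `[0,T]×ℝ^d×M₂(ℝ^d)` that coincide for
`x ∈ supp(μ)` coincide everywhere. Continuity in the measure variable is with respect to the
2-Wasserstein metric `ρ = W2`, expressed sequentially. -/
theorem equal_on_support_implies_equal (d : ℕ) (T : ℝ) (hT : 0 ≤ T)
    (G₁ G₂ : ℝ → Ed d → M2 d → ℝ)
    (hcont₁ : ∀ (s : ℝ) (x : Ed d) (μ : M2 d) (sn : ℕ → ℝ) (xn : ℕ → Ed d) (mn : ℕ → M2 d),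
      Tendsto sn atTop (nhds s) → Tendsto xn atTop (nhds x) →
      Tendsto (fun n => W2 (mn n) μ) atTop (nhds 0) →
      Tendsto (fun n => G₁ (sn n) (xn n) (mn n)) atTop (nhds (G₁ s x μ)))
    (hcont₂ : ∀ (s : ℝ) (x : Ed d) (μ : M2 d) (sn : ℕ → ℝ) (xn : ℕ → Ed d) (mn : ℕ → M2 d),
      Tendsto sn atTop (nhds s) → Tendsto xn atTop (nhds x) →
      Tendsto (fun n => W2 (mn n) μ) atTop (nhds 0) →
      Tendsto (fun n => G₂ (sn n) (xn n) (mn n)) atTop (nhds (G₂ s x μ)))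
    (heq : ∀ s ∈ Set.Icc (0 : ℝ) T, ∀ (μ : M2 d) (x : Ed d),
      (∀ r : ℝ, 0 < r → 0 < μ.1 (Metric.ball x r)) → G₁ s x μ = G₂ s x μ) :
    ∀ s ∈ Set.Icc (0 : ℝ) T, ∀ (x : Ed d) (μ : M2 d), G₁ s x μ = G₂ s x μ :=
  equal_on_support_implies_equal_general d T G₁ G₂ hcont₁ hcont₂ heq
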